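/- Let b > 0 be a real number algebraic over ℚ such that no complex root of its minimal polynomial p over ℚ has modulus greater than b, and suppose η ∈ ℂ with |η| = 1 is such that bη is also a root of p (viewed over ℂ). Then η is a root of unity, i.e. η^k = 1 for some integer k ≥ 1. -/

import Mathlib

/-!
Let `K ⊆ ℂ` be the splitting field of `p = minpoly ℚ b` and `σ ∈ Gal(K/ℚ)` with `σ b = bη`.
Let `R` be the set of roots of `p` of modulus `b`. Every `z ∈ R` satisfies `z * conj z = b²`, so
`‖σ z‖ * ‖σ (conj z)‖ = ‖σ b‖² = b²`; as no root has modulus above `b`, `σ` maps `R` into itself.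
So does complex conjugation, hence `Q = ∏ R` satisfies `Q² = Q * conj Q = b ^ (2 * #R)`.
Applying `σ`, which fixes `Q`, gives `(bη) ^ (2 * #R) = b ^ (2 * #R)`.
-/

open Polynomial IntermediateField ComplexConjugate

theorem Finset.map_prod_eq_prod_of_mapsTo {M F : Type*} [CommMonoid M] [FunLike F M M]
    [MonoidHomClass F M M] {f : F} (hf : Function.Injective f) {s : Finset M}
    (hs : Set.MapsTo f s s) : f (∏ x ∈ s, x) = ∏ x ∈ s, x := by
  rw [map_prod]
  exact Finset.prod_nbij f hs hf.injOn
    (Finset.surjOn_of_injOn_of_card_le f hs hf.injOn le_rfl) fun _ _ => rfl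

open Classical in
noncomputable def rootsWithNorm (p : ℚ[X]) (K : IntermediateField ℚ ℂ) (r : ℝ) : Finset K :=
  ((p.rootSet ℂ).toFinset.filter fun z => ‖z‖ = r).preimage (↑) Subtype.coe_injective.injOn

noncomputable def conjAlgHom (K : IntermediateField ℚ ℂ) [Normal ℚ K] : K →ₐ[ℚ] K :=
  (Complex.conjAe.restrictScalars ℚ).toAlgHom.restrictNormal K

section

variable {p : ℚ[X]} {K : IntermediateField ℚ ℂ} {r b : ℝ}

theorem mem_rootsWithNorm {x : K} :
    x ∈ rootsWithNorm p K r ↔ (x : ℂ) ∈ p.rootSet ℂ ∧ ‖(x : ℂ)‖ = r := by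
  simp [rootsWithNorm]

/- `K` is a `ℚ`-algebra both as an intermediate field and as a field of characteristic zero; the
latter structure is the one found by instance search, and the one these two lemmas refer to. -/
theorem aeval_coe_eq_coe_aeval (x : K) : aeval (x : ℂ) p = (aeval x p : K) :=
  aeval_algHom_apply (K.val : K →+* ℂ).toRatAlgHom x p

theorem minpoly_coe_eq (x : K) : minpoly ℚ (x : ℂ) = minpoly ℚ x :=
  minpoly.algHom_eq (K.val : K →+* ℂ).toRatAlgHom Subtype.val_injective x

theorem coe_algHom_mem_rootSet {x : K} (σ : K →ₐ[ℚ] K) (hx : (x : ℂ) ∈ p.rootSet ℂ) :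
    (σ x : ℂ) ∈ p.rootSet ℂ := by
  rw [mem_rootSet, aeval_coe_eq_coe_aeval] at hx ⊢
  refine ⟨hx.1, ?_⟩
  rw [aeval_algHom_apply, ZeroMemClass.coe_eq_zero.1 hx.2, map_zero, ZeroMemClass.coe_zero]

theorem exists_algEquiv_apply_eq [Normal ℚ K] {x y : K} (hx : IsIntegral ℚ (x : ℂ))
    (hy : aeval (y : ℂ) (minpoly ℚ (x : ℂ)) = 0) : ∃ σ : Gal(K/ℚ), σ x = y :=
  IsConjRoot.exists_algEquiv <| by
    simpa only [isConjRoot_def, minpoly_coe_eq] using (isConjRoot_of_aeval_eq_zero hx hy).symm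

@[simp]
theorem coe_conjAlgHom [Normal ℚ K] (x : K) : (conjAlgHom K x : ℂ) = conj (x : ℂ) :=
  AlgHom.restrictNormal_commutes _ K x

theorem mul_conjAlgHom_eq_sq [Normal ℚ K] {β x : K} (hβ : (β : ℂ) = b)
    (hx : x ∈ rootsWithNorm p K b) : x * conjAlgHom K x = β ^ 2 := by
  apply Subtype.coe_injective
  push_cast
  rw [coe_conjAlgHom, Complex.mul_conj, Complex.normSq_eq_norm_sq, (mem_rootsWithNorm.1 hx).2, hβ]
  push_cast
  ring

theorem mapsTo_rootsWithNorm [Normal ℚ K] (hroots : ∀ z ∈ p.rootSet ℂ, ‖z‖ ≤ b) {β : K}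
    (hβ : (β : ℂ) = b) (σ : K →ₐ[ℚ] K) (hσβ : ‖(σ β : ℂ)‖ = b) :
    Set.MapsTo σ (rootsWithNorm p K b) (rootsWithNorm p K b) := by
  intro x hx
  have hxroot := (mem_rootsWithNorm.1 hx).1
  have hconj : (conjAlgHom K x : ℂ) ∈ p.rootSet ℂ := coe_algHom_mem_rootSet _ hxroot
  have hprod : ‖(σ x : ℂ)‖ * ‖(σ (conjAlgHom K x) : ℂ)‖ = b * b := by
    rw [← norm_mul, ← MulMemClass.coe_mul, ← map_mul, mul_conjAlgHom_eq_sq hβ hx, map_pow]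
    push_cast
    rw [norm_pow, hσβ, sq]
  have hle := hroots _ (coe_algHom_mem_rootSet σ hxroot)
  have hle_conj := hroots _ (coe_algHom_mem_rootSet σ hconj)
  refine mem_rootsWithNorm.2 ⟨coe_algHom_mem_rootSet σ hxroot, ?_⟩
  nlinarith [norm_nonneg (σ x : ℂ)]

theorem prod_rootsWithNorm_sq [Normal ℚ K] (hb : 0 ≤ b) (hroots : ∀ z ∈ p.rootSet ℂ, ‖z‖ ≤ b)
    {β : K} (hβ : (β : ℂ) = b) :
    (∏ x ∈ rootsWithNorm p K b, x) ^ 2 = β ^ (2 * (rootsWithNorm p K b).card) := by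
  set R := rootsWithNorm p K b
  have hconj : conjAlgHom K (∏ x ∈ R, x) = ∏ x ∈ R, x :=
    Finset.map_prod_eq_prod_of_mapsTo (conjAlgHom K).injective
      (mapsTo_rootsWithNorm hroots hβ _ (by simp [hβ, hb]))
  calc (∏ x ∈ R, x) ^ 2 = (∏ x ∈ R, x) * conjAlgHom K (∏ x ∈ R, x) := by rw [hconj, sq]
    _ = ∏ x ∈ R, x * conjAlgHom K x := by rw [map_prod, Finset.prod_mul_distrib]
    _ = ∏ _x ∈ R, β ^ 2 := Finset.prod_congr rfl fun x hx => mul_conjAlgHom_eq_sq hβ hx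
    _ = β ^ (2 * R.card) := by rw [Finset.prod_const, ← pow_mul]

theorem algHom_apply_pow_eq_pow [Normal ℚ K] (hb : 0 ≤ b) (hroots : ∀ z ∈ p.rootSet ℂ, ‖z‖ ≤ b)
    {β : K} (hβ : (β : ℂ) = b) (σ : K →ₐ[ℚ] K) (hσβ : ‖(σ β : ℂ)‖ = b) :
    σ β ^ (2 * (rootsWithNorm p K b).card) = β ^ (2 * (rootsWithNorm p K b).card) := by
  rw [← map_pow, ← prod_rootsWithNorm_sq hb hroots hβ, map_pow,
    Finset.map_prod_eq_prod_of_mapsTo (f := σ) σ.injective (mapsTo_rootsWithNorm hroots hβ σ hσβ)]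

end

theorem unit_modulus_factor_of_root_is_root_of_unity
    (b : ℝ) (hb : 0 < b) (halg : IsAlgebraic ℚ b)
    (hroots : ∀ z ∈ (minpoly ℚ b).rootSet ℂ, ‖z‖ ≤ b)
    (η : ℂ) (hη : ‖η‖ = 1)
    (hroot : (b : ℂ) * η ∈ (minpoly ℚ b).rootSet ℂ) :
    ∃ k : ℕ, 1 ≤ k ∧ η ^ k = 1 := by
  set p := minpoly ℚ b
  have hint : IsIntegral ℚ b := halg.isIntegral
  have hminpoly : minpoly ℚ (b : ℂ) = p := minpoly.algebraMap_eq Complex.ofReal_injective b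
  have hbroot : (b : ℂ) ∈ p.rootSet ℂ := by
    rw [← hminpoly]
    exact mem_rootSet.2 ⟨minpoly.ne_zero hint.algebraMap, minpoly.aeval ℚ _⟩
  have hnorm_b : ‖(b : ℂ)‖ = b := Complex.norm_of_nonneg hb.le
  let K := adjoin ℚ (p.rootSet ℂ)
  have : Normal ℚ K := Normal.of_isSplittingField (p := p)
    (hFEp := adjoin_rootSet_isSplittingField (IsAlgClosed.splits _))
  let β : K := ⟨b, subset_adjoin ℚ _ hbroot⟩
  let γ : K := ⟨b * η, subset_adjoin ℚ _ hroot⟩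
  obtain ⟨σ, hσ⟩ : ∃ σ : Gal(K/ℚ), σ β = γ :=
    exists_algEquiv_apply_eq (x := β) hint.algebraMap <| by
      rw [hminpoly]
      exact (mem_rootSet.1 hroot).2
  have hβR : β ∈ rootsWithNorm p K b := mem_rootsWithNorm.2 ⟨hbroot, hnorm_b⟩
  have key := algHom_apply_pow_eq_pow hb.le hroots (β := β) rfl (σ : K →ₐ[ℚ] K)
    (show ‖((σ β : K) : ℂ)‖ = b by
      rw [hσ, show ((γ : K) : ℂ) = b * η from rfl, norm_mul, hη, mul_one, hnorm_b])
  refine ⟨2 * (rootsWithNorm p K b).card,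
    Nat.one_le_iff_ne_zero.2 (mul_ne_zero two_ne_zero (Finset.card_ne_zero.2 ⟨β, hβR⟩)), ?_⟩
  have hcoe := congrArg ((↑) : K → ℂ) key
  simp only [AlgEquiv.coe_toAlgHom, hσ, SubmonoidClass.coe_pow, γ, β, mul_pow] at hcoe
  exact (mul_eq_left₀ (pow_ne_zero _ (by exact_mod_cast hb.ne'))).1 hcoe
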